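/- arXiv:2403.06080 — 2 statements merged into one kernel-verified Lean document; each statement's English description precedes it below -/
import Mathlib

section
/- A vertex u of a connected undirected graph lies on a cycle if and only if, for every DFS spanning tree T of the graph, u is covered by at least one back edge of T (i.e., u lies on the tree path between the two endpoints of some non-tree edge). -/
open SimpleGraph

/-- `w` lies on every path (hence on the unique path, if `T` is a tree)
from `r` to `u` in `T`. -/
def IsAncestor {V : Type*} (T : SimpleGraph V) (r w u : V) : Prop :=
  ∀ p : T.Walk r u, p.IsPath → w ∈ p.support

/-- `u` lies on every path (hence on the unique tree path) between `a` and `b` in `T`. -/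
def OnTreePath {V : Type*} (T : SimpleGraph V) (a b u : V) : Prop :=
  ∀ p : T.Walk a b, p.IsPath → u ∈ p.support

/-- `T` is a DFS spanning tree of `G` rooted at `r`: a spanning tree in which every
non-tree edge joins a vertex to one of its ancestors. -/
def IsDFSTree {V : Type*} (G T : SimpleGraph V) (r : V) : Prop :=
  T ≤ G ∧ T.IsTree ∧
    ∀ a b, G.Adj a b → ¬ T.Adj a b → IsAncestor T r a b ∨ IsAncestor T r b a

/-- `u` is covered by at least one back edge of `T`: it lies on the tree path between the
endpoints of some non-tree edge of `G`. -/
def CoveredByBackEdge {V : Type*} (G T : SimpleGraph V) (u : V) : Prop :=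
  ∃ a b, G.Adj a b ∧ ¬ T.Adj a b ∧ OnTreePath T a b u

/-!
Let `ux` be an edge of a cycle through `u`. If `ux` is not in the spanning tree `T`, it covers `u`
itself. Otherwise deleting `ux` from `T` separates `x` from `u`, while the rest of the cycle joins
`x` back to `u`, so the cycle crosses this cut along a second edge `ab`. No other tree edge crosses
the cut, so `ab` is a back edge, and every tree path from `a` to `b` uses `ux`, hence passes
through `u`.

Conversely, a back edge `ab` covering `u` closes the tree path from `a` to `b` into a cycle through
`u`, so it suffices that every finite connected graph has a DFS tree. Running the search, the
visited vertices that still have unvisited neighbours always lie on one root path (the stack);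
attaching a new vertex below the deepest of them keeps every edge between visited vertices joining
an ancestor to a descendant.
-/

section

open Finset

variable {V : Type*} {G T : SimpleGraph V}

theorem coveredByBackEdge_of_reachable_deleteEdges (hT : T.IsAcyclic) {u x : V}
    (hux : G.Adj u x) (hxu : (G.deleteEdges {s(u, x)}).Reachable x u) :
    CoveredByBackEdge G T u := by
  by_cases hTux : T.Adj u x
  swap
  · exact ⟨u, x, hux, hTux, fun p _ => p.start_mem_support⟩
  have hcut : ¬ (T.deleteEdges {s(u, x)}).Reachable x u :=
    fun h => isBridge_iff.mp (isAcyclic_iff_forall_adj_isBridge.mp hT hTux) h.symm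
  obtain ⟨p⟩ := hxu
  obtain ⟨d, -, hdx, hd⟩ :=
    p.exists_boundary_dart {v | (T.deleteEdges {s(u, x)}).Reachable x v} .rfl hcut
  obtain ⟨hGd, hdne⟩ := deleteEdges_adj.mp d.adj
  refine ⟨d.fst, d.snd, hGd,
    fun hTd => hd (hdx.trans (deleteEdges_adj.mpr ⟨hTd, hdne⟩).reachable), fun q _ => ?_⟩
  by_contra hu
  refine hd (hdx.trans ⟨q.toDeleteEdges {s(u, x)} fun e he hex => hu ?_⟩)
  rw [Set.mem_singleton_iff.mp hex] at he
  exact q.fst_mem_support_of_mem_edges he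

theorem coveredByBackEdge_of_mem_cycle (hT : T.IsAcyclic) {u w : V} {c : G.Walk w w}
    (hc : c.IsCycle) (hu : u ∈ c.support) : CoveredByBackEdge G T u := by
  classical
  have hc' : (c.rotate u hu).IsCycle := hc.rotate hu
  obtain ⟨hadj, hreach⟩ := adj_and_reachable_delete_edges_iff_exists_cycle.mpr
    ⟨u, _, hc', Walk.mk_start_snd_mem_edges hc'.not_nil⟩
  exact coveredByBackEdge_of_reachable_deleteEdges hT hadj hreach.symm

theorem exists_isCycle_of_coveredByBackEdge (hle : T ≤ G) (hT : T.Connected) {u : V}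
    (h : CoveredByBackEdge G T u) :
    ∃ (w : V) (c : G.Walk w w), c.IsCycle ∧ u ∈ c.support := by
  obtain ⟨a, b, hab, hTab, hu⟩ := h
  obtain ⟨p, hp⟩ := hT.preconnected.exists_isPath a b
  refine ⟨b, .cons hab.symm (p.mapLe hle), ?_, ?_⟩
  · rw [Walk.cons_isCycle_iff, Walk.edges_mapLe_eq_edges]
    exact ⟨hp.mapLe hle, fun he => hTab (p.adj_of_mem_edges he).symm⟩
  · simp [hu p hp]

theorem isAcyclic_of_forall_adj_le_eq (f : V → ℕ)
    (hf : ∀ v x y, G.Adj v x → G.Adj v y → f x ≤ f v → f y ≤ f v → x = y) :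
    G.IsAcyclic := by
  classical
  intro w c hc
  obtain ⟨m, hm, hmax⟩ := c.support.toFinset.exists_max_image f ⟨w, by simp⟩
  rw [List.mem_toFinset] at hm
  have hc' := hc.rotate hm
  have hle : ∀ v ∈ (c.rotate m hm).support, f v ≤ f m := fun v hv =>
    hmax v (List.mem_toFinset.mpr ((c.mem_support_rotate_iff m hm).mp hv))
  exact hc'.snd_ne_penultimate <| hf m _ _ (Walk.adj_snd hc'.not_nil)
    (Walk.adj_penultimate hc'.not_nil).symm (hle _ (Walk.getVert_mem_support _ _))
    (hle _ (Walk.getVert_mem_support _ _))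

/-- The state of a depth-first search from `r` after visiting `D`, with `pt v` the root path of `v`;
`frontier_chain` says that the stack is a single root path. -/
structure IsPartialDFS (G : SimpleGraph V) (r : V) (D : Finset V) (pt : V → List V) : Prop where
  root_mem : r ∈ D
  pt_root : pt r = [r]
  nodup : ∀ v ∈ D, (pt v).Nodup
  getLast?_eq : ∀ v ∈ D, (pt v).getLast? = some v
  subset : ∀ v ∈ D, ∀ w ∈ pt v, w ∈ D
  parent : ∀ v ∈ D, v ≠ r → ∃ w ∈ D, G.Adj w v ∧ pt v = pt w ++ [v]
  prefix_or_prefix : ∀ a ∈ D, ∀ b ∈ D, G.Adj a b → pt a <+: pt b ∨ pt b <+: pt a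
  frontier_chain : ∃ t ∈ D, ∀ a ∈ D, ∀ b ∉ D, G.Adj a b → pt a <+: pt t

theorem isPartialDFS_singleton (G : SimpleGraph V) (r : V) :
    IsPartialDFS G r {r} fun _ => [r] where
  root_mem := mem_singleton_self r
  pt_root := rfl
  nodup _ _ := List.nodup_singleton r
  getLast?_eq _ hv := by rw [mem_singleton.mp hv]; rfl
  subset _ _ _ hw := by simpa using hw
  parent _ hv hvr := absurd (mem_singleton.mp hv) hvr
  prefix_or_prefix _ _ _ _ _ := .inl (List.prefix_refl _)
  frontier_chain := ⟨r, mem_singleton_self r, fun _ _ _ _ _ => List.prefix_refl _⟩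

theorem IsPartialDFS.push [DecidableEq V] {r t y : V} {D : Finset V} {pt : V → List V}
    (h : IsPartialDFS G r D pt) (ht : t ∈ D) (hy : y ∉ D) (hty : G.Adj t y)
    (htop : ∀ a ∈ D, ∀ b ∉ D, G.Adj a b → pt a <+: pt t) :
    IsPartialDFS G r (insert y D) (Function.update pt y (pt t ++ [y])) := by
  set pt' := Function.update pt y (pt t ++ [y])
  have hpt'y : pt' y = pt t ++ [y] := Function.update_self ..
  have hpt' : ∀ v ∈ D, pt' v = pt v := fun v hv =>
    Function.update_of_ne (ne_of_mem_of_not_mem hv hy) ..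
  have hprefix : ∀ a ∈ D, ∀ b ∉ D, G.Adj a b → pt' a <+: pt' y := fun a ha b hb hab => by
    rw [hpt' a ha, hpt'y]
    exact (htop a ha b hb hab).trans (List.prefix_append _ _)
  refine
    { root_mem := mem_insert_of_mem h.root_mem
      pt_root := by rw [hpt' r h.root_mem, h.pt_root]
      nodup := ?nodup
      getLast?_eq := ?getLast?_eq
      subset := ?subset
      parent := ?parent
      prefix_or_prefix := ?prefix_or_prefix
      frontier_chain := ⟨y, mem_insert_self y D, ?frontier_chain⟩ }
  case nodup =>
    simp only [forall_mem_insert, hpt'y]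
    refine ⟨(h.nodup t ht).append (List.nodup_singleton y) ?_,
      fun v hv => hpt' v hv ▸ h.nodup v hv⟩
    simpa using fun hyt => hy (h.subset t ht y hyt)
  case getLast?_eq =>
    simp only [forall_mem_insert, hpt'y, List.getLast?_concat, true_and]
    exact fun v hv => hpt' v hv ▸ h.getLast?_eq v hv
  case subset =>
    simp only [forall_mem_insert, hpt'y, List.mem_append, List.mem_singleton]
    refine ⟨fun w hw => ?_,
      fun v hv w hw => mem_insert_of_mem (h.subset v hv w (hpt' v hv ▸ hw))⟩
    rcases hw with hw | rfl
    exacts [mem_insert_of_mem (h.subset t ht w hw), mem_insert_self w D]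
  case parent =>
    simp only [forall_mem_insert]
    refine ⟨fun _ => ⟨t, mem_insert_of_mem ht, hty, by rw [hpt'y, hpt' t ht]⟩,
      fun v hv hvr => ?_⟩
    obtain ⟨w, hw, hwv, hptv⟩ := h.parent v hv hvr
    exact ⟨w, mem_insert_of_mem hw, hwv, by rw [hpt' v hv, hpt' w hw, hptv]⟩
  case prefix_or_prefix =>
    simp only [forall_mem_insert]
    refine ⟨⟨fun hyy => absurd hyy G.irrefl,
      fun b hb hyb => .inr (hprefix b hb y hy hyb.symm)⟩,
      fun a ha => ⟨fun hay => .inl (hprefix a ha y hy hay), fun b hb hab => ?_⟩⟩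
    rw [hpt' a ha, hpt' b hb]
    exact h.prefix_or_prefix a ha b hb hab
  case frontier_chain =>
    simp only [forall_mem_insert]
    exact ⟨fun _ _ _ => List.prefix_refl _,
      fun a ha b hb => hprefix a ha b fun hbD => hb (mem_insert_of_mem hbD)⟩

theorem IsPartialDFS.exists_insert [DecidableEq V] {r : V} {D : Finset V} {pt : V → List V}
    (h : IsPartialDFS G r D pt) {a b : V} (ha : a ∈ D) (hb : b ∉ D) (hab : G.Adj a b) :
    ∃ y ∉ D, ∃ pt', IsPartialDFS G r (insert y D) pt' := by
  classical
  set F := D.filter fun a => ∃ b ∉ D, G.Adj a b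
  obtain ⟨t, htF, htmax⟩ :=
    F.exists_max_image (fun a => (pt a).length) ⟨a, mem_filter.mpr ⟨ha, b, hb, hab⟩⟩
  obtain ⟨htD, y, hyD, hty⟩ := mem_filter.mp htF
  obtain ⟨s, -, hs⟩ := h.frontier_chain
  -- the frontier lies on the chain of prefixes of `pt s`, so its deepest vertex `t` is its top
  have htop : ∀ a ∈ D, ∀ b ∉ D, G.Adj a b → pt a <+: pt t := fun a ha b hb hab =>
    List.prefix_of_prefix_length_le (hs a ha b hb hab) (hs t htD y hyD hty)
      (htmax a (mem_filter.mpr ⟨ha, b, hb, hab⟩))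
  exact ⟨y, hyD, _, h.push htD hyD hty htop⟩

theorem exists_isPartialDFS_univ [Fintype V] (hG : G.Connected) (r : V) :
    ∃ pt, IsPartialDFS G r univ pt := by
  classical
  obtain ⟨D, hD, hmax⟩ :=
    (univ.filter fun D : Finset V => ∃ pt, IsPartialDFS G r D pt).exists_max_image card
      ⟨{r}, mem_filter.mpr ⟨mem_univ _, _, isPartialDFS_singleton G r⟩⟩
  obtain ⟨pt, hpt⟩ := (mem_filter.mp hD).2
  suffices D = univ from this ▸ ⟨pt, hpt⟩
  refine eq_univ_of_forall fun v => by_contra fun hv => ?_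
  obtain ⟨d, -, hdD, hd⟩ := (hG.preconnected r v).some.exists_boundary_dart D hpt.root_mem hv
  obtain ⟨y, hy, pt', hpt'⟩ := hpt.exists_insert hdD hd d.adj
  have := hmax (insert y D) (mem_filter.mpr ⟨mem_univ _, pt', hpt'⟩)
  rw [card_insert_of_notMem hy] at this
  omega

def rootPathTree (G : SimpleGraph V) (pt : V → List V) : SimpleGraph V :=
  fromRel fun a b => G.Adj a b ∧ pt b = pt a ++ [b]

theorem rootPathTree_le (pt : V → List V) : rootPathTree G pt ≤ G := by
  rintro a b ⟨-, ⟨hab, -⟩ | ⟨hba, -⟩⟩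
  exacts [hab, hba.symm]

namespace IsPartialDFS

variable [Fintype V] {r : V} {pt : V → List V}

theorem exists_walk_support_eq (h : IsPartialDFS G r univ pt) (v : V) :
    ∃ p : (rootPathTree G pt).Walk r v, p.support = pt v := by
  induction hn : (pt v).length using Nat.strong_induction_on generalizing v with
  | _ n ih =>
  obtain rfl | hvr := eq_or_ne v r
  · exact ⟨.nil, h.pt_root.symm⟩
  obtain ⟨w, -, hwv, hpt⟩ := h.parent v (mem_univ v) hvr
  obtain ⟨p, hp⟩ := ih _ (by rw [← hn, hpt]; simp) w rfl
  have hT : (rootPathTree G pt).Adj w v := (fromRel_adj _ _ _).mpr ⟨hwv.ne, .inl ⟨hwv, hpt⟩⟩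
  exact ⟨p.concat hT, by rw [Walk.support_concat, hp, hpt]⟩

theorem isTree (h : IsPartialDFS G r univ pt) : (rootPathTree G pt).IsTree := by
  refine ⟨(connected_iff_exists_forall_reachable _).mpr
    ⟨r, fun v => (h.exists_walk_support_eq v).elim fun p _ => p.reachable⟩,
    isAcyclic_of_forall_adj_le_eq (fun v => (pt v).length) ?_⟩
  have hparent : ∀ {v x}, (rootPathTree G pt).Adj v x → (pt x).length ≤ (pt v).length →
      pt v = pt x ++ [v] := by
    rintro v x ⟨-, ⟨-, hx⟩ | ⟨-, hv⟩⟩ hle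
    · rw [hx] at hle; simp at hle
    · exact hv
  intro v x y hx hy hxle hyle
  have := List.append_cancel_right ((hparent hx hxle).symm.trans (hparent hy hyle))
  exact Option.some_injective _
    (by rw [← h.getLast?_eq x (mem_univ _), this, h.getLast?_eq y (mem_univ _)])

theorem isAncestor_of_prefix (h : IsPartialDFS G r univ pt) {a b : V}
    (hab : pt a <+: pt b) : IsAncestor (rootPathTree G pt) r a b := by
  intro q hq
  obtain ⟨p, hp⟩ := h.exists_walk_support_eq b
  have hpath : p.IsPath := by rw [Walk.isPath_def, hp]; exact h.nodup b (mem_univ b)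
  rw [(h.isTree.existsUnique_path r b).unique hq hpath, hp]
  exact hab.subset (List.mem_of_getLast? (h.getLast?_eq a (mem_univ a)))

theorem isDFSTree (h : IsPartialDFS G r univ pt) : IsDFSTree G (rootPathTree G pt) r :=
  ⟨rootPathTree_le pt, h.isTree, fun a b hab _ =>
    (h.prefix_or_prefix a (mem_univ a) b (mem_univ b) hab).imp
      h.isAncestor_of_prefix h.isAncestor_of_prefix⟩

end IsPartialDFS

theorem SimpleGraph.Connected.exists_isDFSTree [Fintype V] (hG : G.Connected) (r : V) :
    ∃ T, IsDFSTree G T r :=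
  let ⟨_, h⟩ := exists_isPartialDFS_univ hG r
  ⟨_, h.isDFSTree⟩

end

/-- A vertex of a connected graph lies on a cycle iff, for every DFS spanning
tree, it is covered by at least one back edge. -/
theorem stmt3 {V : Type*} [Fintype V] (G : SimpleGraph V) (hG : G.Connected) (u : V) :
    (∃ (w : V) (c : G.Walk w w), c.IsCycle ∧ u ∈ c.support) ↔
    (∀ (T : SimpleGraph V) (r : V), IsDFSTree G T r → CoveredByBackEdge G T u) := by
  constructor
  · rintro ⟨w, c, hc, hu⟩ T r ⟨-, hT, -⟩
    exact coveredByBackEdge_of_mem_cycle hT.isAcyclic hc hu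
  · intro h
    obtain ⟨T, hT⟩ := hG.exists_isDFSTree u
    exact exists_isCycle_of_coveredByBackEdge hT.1 hT.2.1.connected (h T u hT)
end

section
/- Let T be a DFS spanning tree of a connected undirected graph G. A tree edge {u,w} of T (with u the parent of w) is a bridge of G if and only if no back edge of G covers it, i.e., no non-tree edge has one endpoint in the subtree rooted at w and the other endpoint an ancestor of u. -/
/-!
Removing the tree edge `{u, w}` splits `T` into the subtree of `w` and the rest, so `{u, w}`
is a bridge of `G` iff no edge of `G` other than `{u, w}` leaves the subtree of `w`. A tree
edge leaving it must be `{u, w}` itself, and by the DFS property a non-tree edge leaving it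
joins a descendant `x` of `w` to an ancestor `a` of `x` outside the subtree; since the
ancestors of `x` form a chain through `w`, such an `a` is an ancestor of `u`. Conversely such
an edge closes the cycle `u ⟶ a ⟶ x ⟶ w` of tree paths that avoids `{u, w}`.
-/

open SimpleGraph

def IsStrictAncestor {V : Type*} (T : SimpleGraph V) (r w u : V) : Prop :=
  IsAncestor T r w u ∧ w ≠ u

lemma SimpleGraph.Walk.reachable_deleteEdges_of_notMem_support {V : Type*} {G : SimpleGraph V}
    {a b u w : V} (p : G.Walk a b) (hu : u ∉ p.support) :
    (G.deleteEdges {s(u, w)}).Reachable a b :=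
  ⟨p.toDeleteEdges _ fun _ he hmem => hu <| p.fst_mem_support_of_mem_edges <|
    (Set.mem_singleton_iff.1 hmem) ▸ he⟩

namespace IsAncestor

variable {V : Type*} {T : SimpleGraph V} {r a b c : V}

lemma refl (T : SimpleGraph V) (r a : V) : IsAncestor T r a a :=
  fun p _ => p.end_mem_support

lemma trans (hab : IsAncestor T r a b) (hbc : IsAncestor T r b c) : IsAncestor T r a c := by
  classical
  intro p hp
  have hb := hbc p hp
  exact p.support_takeUntil_subset_support hb (hab _ (hp.takeUntil hb))

end IsAncestor

section RootedTree

variable {V : Type*} {T : SimpleGraph V} {r a b c u w x y z : V}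

lemma isAncestor_iff_mem_support (hT : T.IsAcyclic) {p : T.Walk r b} (hp : p.IsPath) :
    IsAncestor T r a b ↔ a ∈ p.support := by
  refine ⟨fun h => h p hp, fun h q hq => ?_⟩
  obtain rfl : q = p := congrArg Subtype.val ((hT.subsingleton_path r b).elim ⟨q, hq⟩ ⟨p, hp⟩)
  exact h

lemma IsAncestor.antisymm (hT : T.IsTree) (hab : IsAncestor T r a b)
    (hba : IsAncestor T r b a) : a = b := by
  classical
  by_contra hne
  obtain ⟨p, hp⟩ := hT.connected.exists_isPath r b
  have ha := hab p hp
  exact Walk.endpoint_notMem_support_takeUntil hp ha (Ne.symm hne) (hba _ (hp.takeUntil ha))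

lemma IsStrictAncestor.not_isAncestor (hT : T.IsTree) (h : IsStrictAncestor T r a b) :
    ¬ IsAncestor T r b a :=
  fun hba => h.2 (h.1.antisymm hT hba)

lemma isAncestor_of_mem_support_dropUntil [DecidableEq V] (hT : T.IsAcyclic)
    {p : T.Walk r b} (hp : p.IsPath) (ha : a ∈ p.support)
    (hc : c ∈ (p.dropUntil a ha).support) : IsAncestor T r a c := by
  set s := p.dropUntil a ha
  have hsplit : ((p.takeUntil a ha).append (s.takeUntil c hc)).append (s.dropUntil c hc) = p := by
    rw [← Walk.append_assoc, s.take_spec, p.take_spec]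
  have hprefix : ((p.takeUntil a ha).append (s.takeUntil c hc)).IsPath :=
    (hsplit ▸ hp).of_append_left
  exact (isAncestor_iff_mem_support hT hprefix).2
    ((Walk.mem_support_append_iff _ _).2 (Or.inl (Walk.end_mem_support _)))

lemma IsAncestor.total (hT : T.IsTree) (ha : IsAncestor T r a c) (hb : IsAncestor T r b c) :
    IsAncestor T r a b ∨ IsAncestor T r b a := by
  classical
  obtain ⟨p, hp⟩ := hT.connected.exists_isPath r c
  have hbp := hb p hp
  have hap : a ∈ ((p.takeUntil b hbp).append (p.dropUntil b hbp)).support := by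
    rw [p.take_spec]; exact ha p hp
  rcases (Walk.mem_support_append_iff _ _).1 hap with h | h
  · exact .inl ((isAncestor_iff_mem_support hT.isAcyclic (hp.takeUntil hbp)).2 h)
  · exact .inr (isAncestor_of_mem_support_dropUntil hT.isAcyclic hp hbp h)

lemma isAncestor_iff_of_adj (hT : T.IsTree) (hxy : T.Adj x y) (hyx : ¬ IsAncestor T r y x) :
    IsAncestor T r z y ↔ IsAncestor T r z x ∨ z = y := by
  obtain ⟨p, hp⟩ := hT.connected.exists_isPath r x
  have hy : y ∉ p.support := fun h => hyx ((isAncestor_iff_mem_support hT.isAcyclic hp).2 h)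
  rw [isAncestor_iff_mem_support hT.isAcyclic (hp.concat hy hxy),
    isAncestor_iff_mem_support hT.isAcyclic hp, Walk.support_concat, List.mem_append,
    List.mem_singleton]

lemma reachable_deleteEdges_of_not_isAncestor (hwy : ¬ IsAncestor T r w y) :
    (T.deleteEdges {s(u, w)}).Reachable r y := by
  simp only [IsAncestor, not_forall] at hwy
  obtain ⟨p, -, hw⟩ := hwy
  exact Sym2.eq_swap ▸ p.reachable_deleteEdges_of_notMem_support hw

lemma reachable_deleteEdges_of_isAncestor (hT : T.IsTree) (hwu : ¬ IsAncestor T r w u)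
    (hwy : IsAncestor T r w y) : (T.deleteEdges {s(u, w)}).Reachable w y := by
  classical
  obtain ⟨p, hp⟩ := hT.connected.exists_isPath r y
  have hw := hwy p hp
  exact (p.dropUntil w hw).reachable_deleteEdges_of_notMem_support
    fun hu => hwu (isAncestor_of_mem_support_dropUntil hT.isAcyclic hp hw hu)

end RootedTree

section ParentEdge

variable {V : Type*} {G T : SimpleGraph V} {r u w x y a : V}

lemma eq_of_adj_of_not_isAncestor_of_isAncestor (hT : T.IsTree) (huw : T.Adj u w)
    (hwu : ¬ IsAncestor T r w u) (hxy : T.Adj x y) (hwx : ¬ IsAncestor T r w x)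
    (hwy : IsAncestor T r w y) : s(x, y) = s(u, w) := by
  have hyx : ¬ IsAncestor T r y x := fun h => hwx (hwy.trans h)
  obtain rfl : w = y := ((isAncestor_iff_of_adj hT hxy hyx).1 hwy).resolve_left hwx
  have hxu : IsAncestor T r x u :=
    ((isAncestor_iff_of_adj hT huw hwu).1 ((isAncestor_iff_of_adj hT hxy hyx).2
      (.inl (IsAncestor.refl T r x)))).resolve_right hxy.ne
  have hux : IsAncestor T r u x :=
    ((isAncestor_iff_of_adj hT hxy hyx).1 ((isAncestor_iff_of_adj hT huw hwu).2
      (.inl (IsAncestor.refl T r u)))).resolve_right huw.ne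
  rw [hxu.antisymm hT hux]

lemma isAncestor_of_isAncestor_of_not_isAncestor (hT : T.IsTree) (huw : T.Adj u w)
    (hwu : ¬ IsAncestor T r w u) (hxy : IsAncestor T r x y) (hwx : ¬ IsAncestor T r w x)
    (hwy : IsAncestor T r w y) : IsAncestor T r x u := by
  have hxw : IsAncestor T r x w := (hxy.total hT hwy).resolve_right hwx
  exact ((isAncestor_iff_of_adj hT huw hwu).1 hxw).resolve_right
    fun hx => hwx (hx ▸ IsAncestor.refl T r x)

lemma reachable_deleteEdges_of_covering (hle : T ≤ G) (hT : T.IsTree) (huw : T.Adj u w)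
    (hwu : ¬ IsAncestor T r w u) (hxa : G.Adj x a) (hnT : ¬ T.Adj x a)
    (hwx : IsAncestor T r w x) (hau : IsAncestor T r a u) :
    (G.deleteEdges {s(u, w)}).Reachable u w := by
  have hwa : ¬ IsAncestor T r w a := fun h => hwu (h.trans hau)
  have hax : (G.deleteEdges {s(u, w)}).Adj a x := by
    refine (deleteEdges_adj ..).2 ⟨hxa.symm, fun h => hnT ?_⟩
    rcases Sym2.eq_iff.1 (Set.mem_singleton_iff.1 h) with ⟨rfl, rfl⟩ | ⟨rfl, rfl⟩
    · exact huw.symm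
    · exact huw
  have hmono := deleteEdges_mono (s := {s(u, w)}) hle
  exact (((reachable_deleteEdges_of_not_isAncestor hwu).symm.trans
    (reachable_deleteEdges_of_not_isAncestor hwa)).mono hmono).trans <|
      hax.reachable.trans ((reachable_deleteEdges_of_isAncestor hT hwu hwx).mono hmono).symm

lemma exists_covering_of_reachable_deleteEdges (hT : IsDFSTree G T r) (huw : T.Adj u w)
    (hwu : ¬ IsAncestor T r w u) (h : (G.deleteEdges {s(u, w)}).Reachable u w) :
    ∃ x a, G.Adj x a ∧ ¬ T.Adj x a ∧ IsAncestor T r w x ∧ IsAncestor T r a u := by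
  obtain ⟨-, htree, hdfs⟩ := hT
  obtain ⟨p⟩ := h
  obtain ⟨⟨⟨x, y⟩, hxy⟩, -, hwx, hwy⟩ :=
    p.exists_boundary_dart {v | ¬ IsAncestor T r w v} hwu (by simpa using IsAncestor.refl T r w)
  simp only [Set.mem_ofPred_eq, not_not] at hwx hwy
  obtain ⟨hGxy, hne⟩ := (deleteEdges_adj ..).1 hxy
  have hnT : ¬ T.Adj x y := fun hTxy =>
    hne (eq_of_adj_of_not_isAncestor_of_isAncestor htree huw hwu hTxy hwx hwy)
  rcases hdfs x y hGxy hnT with hxy' | hyx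
  · exact ⟨y, x, hGxy.symm, fun h => hnT h.symm, hwy,
      isAncestor_of_isAncestor_of_not_isAncestor htree huw hwu hxy' hwx hwy⟩
  · exact absurd (hwy.trans hyx) hwx

end ParentEdge

theorem stmt7_general {V : Type*} (G T : SimpleGraph V) (r : V)
    (hT : IsDFSTree G T r)
    (u w : V) (huw : T.Adj u w) (hparent : IsStrictAncestor T r u w) :
    G.IsBridge s(u, w) ↔
      ¬ ∃ x a, G.Adj x a ∧ ¬ T.Adj x a ∧ IsAncestor T r w x ∧ IsAncestor T r a u := by
  have hwu := hparent.not_isAncestor hT.2.1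
  rw [isBridge_iff, not_iff_not]
  exact ⟨exists_covering_of_reachable_deleteEdges hT huw hwu,
    fun ⟨_, _, hxa, hnT, hwx, hau⟩ =>
      reachable_deleteEdges_of_covering hT.1 hT.2.1 huw hwu hxa hnT hwx hau⟩

/-- A tree edge `{u, w}` of a DFS spanning tree (with `u` the parent of `w`) is a bridge
of `G` iff no non-tree edge has one endpoint in the subtree rooted at `w` and the other
endpoint an ancestor of `u`. -/
theorem stmt7 {V : Type*} [Fintype V] (G T : SimpleGraph V) (r : V)
    (hG : G.Connected) (hT : IsDFSTree G T r)
    (u w : V) (huw : T.Adj u w) (hparent : IsStrictAncestor T r u w) :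
    G.IsBridge s(u, w) ↔
      ¬ ∃ x a, G.Adj x a ∧ ¬ T.Adj x a ∧ IsAncestor T r w x ∧ IsAncestor T r a u :=
  stmt7_general G T r hT u w huw hparent
end
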